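/- arXiv:quant-ph/0308062 — 2 statements merged into one kernel-verified Lean document; each statement's English description precedes it below -/
import Mathlib

section
/- For each nonnegative integer m, the deformed harmonic oscillator potential U(x) = x² - 2·(d²/dx²)(log H_{2m}(ix)) - 2 is a smooth real-valued function on all of ℝ, and the function ψ(x) = e^{-x²/2}/H_{2m}(ix) satisfies -ψ'' + U·ψ = (-1 - 4m)·ψ. -/
open Polynomial

/-- The physicists' Hermite polynomials: H₀ = 1, H₁ = 2x, H_{n+2} = 2x·H_{n+1} - 2(n+1)·H_n. -/
noncomputable def hermiteP : ℕ → Polynomial ℝ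
  | 0 => 1
  | 1 => Polynomial.C 2 * Polynomial.X
  | (n + 2) => Polynomial.C 2 * Polynomial.X * hermiteP (n + 1)
      - Polynomial.C (2 * ((n : ℝ) + 1)) * hermiteP n

/-- Auxiliary polynomials: `hermQ n` is the real polynomial with `H_n(ix) = iⁿ·(hermQ n)(x)`. -/
noncomputable def hermQ : ℕ → Polynomial ℝ
  | 0 => 1
  | 1 => Polynomial.C 2 * Polynomial.X
  | (n + 2) => Polynomial.C 2 * Polynomial.X * hermQ (n + 1)
      + Polynomial.C (2 * ((n : ℝ) + 1)) * hermQ n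

lemma hermQ_add_two (n : ℕ) : hermQ (n + 2)
    = Polynomial.C 2 * Polynomial.X * hermQ (n + 1)
      + Polynomial.C (2 * ((n : ℝ) + 1)) * hermQ n := by
  simp [hermQ]

lemma hermiteP_add_two (n : ℕ) : hermiteP (n + 2)
    = Polynomial.C 2 * Polynomial.X * hermiteP (n + 1)
      - Polynomial.C (2 * ((n : ℝ) + 1)) * hermiteP n := by
  simp [hermiteP]

lemma hermQ_evalI : ∀ (n : ℕ) (x : ℝ),
    Polynomial.aeval (Complex.I * (x : ℂ)) (hermiteP n)
      = Complex.I ^ n * (((hermQ n).eval x : ℝ) : ℂ) := by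
  intro n
  induction n using Nat.twoStepInduction with
  | zero => intro x; simp [hermiteP, hermQ]
  | one =>
    intro x
    show Polynomial.aeval (Complex.I * (x : ℂ)) (hermiteP 1) = _
    rw [show hermiteP 1 = Polynomial.C 2 * Polynomial.X from rfl,
      show hermQ 1 = Polynomial.C 2 * Polynomial.X from rfl]
    simp
    try ring
  | more n ih1 ih2 =>
    intro x
    rw [hermiteP_add_two n, hermQ_add_two n]
    simp only [map_sub, map_mul, map_add, Polynomial.aeval_X, Polynomial.aeval_C,
      Polynomial.eval_add, Polynomial.eval_mul, Polynomial.eval_C, Polynomial.eval_X,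
      ih1, ih2, Complex.coe_algebraMap]
    push_cast
    linear_combination (-(2 * ((n : ℂ) + 1)) * Complex.I ^ n * (((hermQ n).eval x : ℝ) : ℂ))
      * Complex.I_sq

lemma hermQ_deriv : ∀ (n : ℕ) (x : ℝ),
    (Polynomial.derivative (hermQ (n + 1))).eval x = 2 * ((n : ℝ) + 1) * (hermQ n).eval x := by
  intro n
  induction n using Nat.twoStepInduction with
  | zero =>
    intro x
    show (Polynomial.derivative (hermQ 1)).eval x = _
    rw [show hermQ 1 = Polynomial.C 2 * Polynomial.X from rfl,
      show hermQ 0 = 1 from rfl]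
    simp
  | one =>
    intro x
    show (Polynomial.derivative (hermQ 2)).eval x = _
    have e : hermQ 2 = Polynomial.C 2 * Polynomial.X * hermQ 1
        + Polynomial.C (2 * (((0 : ℕ) : ℝ) + 1)) * hermQ 0 := hermQ_add_two 0
    rw [e, show hermQ 1 = Polynomial.C 2 * Polynomial.X from rfl,
      show hermQ 0 = 1 from rfl]
    simp
    try ring
  | more n ih1 ih2 =>
    intro x
    rw [show n + 2 + 1 = (n + 1) + 2 from rfl, hermQ_add_two (n + 1)]
    simp only [Polynomial.derivative_add, Polynomial.derivative_mul, Polynomial.derivative_C,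
      Polynomial.derivative_X, Polynomial.eval_add, Polynomial.eval_mul, Polynomial.eval_C,
      Polynomial.eval_X, Polynomial.eval_zero, zero_mul, zero_add, mul_one, add_zero, one_mul]
    rw [show n + 1 + 1 = n + 2 from rfl] at *
    rw [ih2 x, ih1 x]
    rw [hermQ_add_two n]
    simp only [Polynomial.eval_add, Polynomial.eval_mul, Polynomial.eval_C, Polynomial.eval_X]
    push_cast
    try ring

lemma hermQ_deriv_poly (n : ℕ) :
    Polynomial.derivative (hermQ (n + 1)) = Polynomial.C (2 * ((n : ℝ) + 1)) * hermQ n := by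
  apply Polynomial.funext
  intro x
  rw [Polynomial.eval_mul, Polynomial.eval_C]
  exact hermQ_deriv n x

lemma hermQ_nonneg : ∀ (n : ℕ) (x : ℝ), 0 ≤ x →
    0 < (hermQ (2 * n)).eval x ∧ 0 ≤ (hermQ (2 * n + 1)).eval x := by
  intro n
  induction n with
  | zero =>
    intro x hx
    constructor
    · show (0:ℝ) < (hermQ 0).eval x
      rw [show hermQ 0 = 1 from rfl]; simp
    · show (0:ℝ) ≤ (hermQ 1).eval x
      rw [show hermQ 1 = Polynomial.C 2 * Polynomial.X from rfl]
      simp; linarith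
  | succ n ih =>
    intro x hx
    obtain ⟨h1, h2⟩ := ih x hx
    have e1 : (hermQ (2 * n + 2)).eval x
        = 2 * x * (hermQ (2 * n + 1)).eval x
          + (2 * (((2 * n : ℕ) : ℝ) + 1)) * (hermQ (2 * n)).eval x := by
      rw [hermQ_add_two (2 * n)]
      simp only [Polynomial.eval_add, Polynomial.eval_mul, Polynomial.eval_C, Polynomial.eval_X]
      try ring
    have c1 : (0:ℝ) < 2 * (((2 * n : ℕ) : ℝ) + 1) := by positivity
    have h3 : 0 < (hermQ (2 * n + 2)).eval x := by
      rw [e1]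
      have : 0 ≤ 2 * x * (hermQ (2 * n + 1)).eval x := by positivity
      nlinarith
    constructor
    · rw [show 2 * (n + 1) = 2 * n + 2 from by omega]; exact h3
    · rw [show 2 * (n + 1) + 1 = (2 * n + 1) + 2 from by omega]
      have e2 : (hermQ (2 * n + 1 + 2)).eval x
          = 2 * x * (hermQ (2 * n + 2)).eval x
            + (2 * (((2 * n + 1 : ℕ) : ℝ) + 1)) * (hermQ (2 * n + 1)).eval x := by
        rw [hermQ_add_two (2 * n + 1)]
        simp only [Polynomial.eval_add, Polynomial.eval_mul, Polynomial.eval_C, Polynomial.eval_X,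
          show 2 * n + 1 + 1 = 2 * n + 2 from rfl]
        try ring
      rw [e2]
      have c2 : (0:ℝ) < 2 * (((2 * n + 1 : ℕ) : ℝ) + 1) := by positivity
      nlinarith

lemma hermQ_even_odd : ∀ (n : ℕ) (x : ℝ),
    (hermQ n).eval (-x) = (-1) ^ n * (hermQ n).eval x := by
  intro n
  induction n using Nat.twoStepInduction with
  | zero => intro x; rw [show hermQ 0 = 1 from rfl]; simp
  | one =>
    intro x
    rw [show hermQ 1 = Polynomial.C 2 * Polynomial.X from rfl]
    simp
    try ring
  | more n ih1 ih2 =>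
    intro x
    have e : ∀ y : ℝ, (hermQ (n + 2)).eval y
        = 2 * y * (hermQ (n + 1)).eval y + (2 * ((n : ℝ) + 1)) * (hermQ n).eval y := by
      intro y
      rw [hermQ_add_two n]
      simp only [Polynomial.eval_add, Polynomial.eval_mul, Polynomial.eval_C, Polynomial.eval_X]
      try ring
    rw [e, e, ih1, ih2, pow_succ, pow_succ]
    try ring

lemma hermQ_pos (n : ℕ) (x : ℝ) : 0 < (hermQ (2 * n)).eval x := by
  rcases le_or_gt 0 x with hx | hx
  · exact (hermQ_nonneg n x hx).1
  · have h1 := (hermQ_nonneg n (-x) (by linarith)).1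
    have h2 := hermQ_even_odd (2 * n) (-x)
    rw [neg_neg] at h2
    rw [h2, pow_mul]
    norm_num
    exact h1

lemma hermQ_ode (m : ℕ) (x : ℝ) :
    (Polynomial.derivative (Polynomial.derivative (hermQ (2 * m)))).eval x
      = 4 * m * (hermQ (2 * m)).eval x
        - 2 * x * (Polynomial.derivative (hermQ (2 * m))).eval x := by
  cases m with
  | zero =>
    rw [show 2 * 0 = 0 from rfl, show hermQ 0 = 1 from rfl]
    simp
  | succ k =>
    rw [show 2 * (k + 1) = (2 * k + 1) + 1 from by omega, hermQ_deriv_poly (2 * k + 1)]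
    rw [Polynomial.derivative_mul, Polynomial.derivative_C, zero_mul, zero_add,
      hermQ_deriv_poly (2 * k)]
    rw [show (2 * k + 1) + 1 = 2 * k + 2 from rfl, hermQ_add_two (2 * k)]
    simp only [Polynomial.eval_add, Polynomial.eval_mul, Polynomial.eval_C, Polynomial.eval_X]
    push_cast
    try ring

lemma contDiff_polyeval (p : Polynomial ℝ) : ContDiff ℝ (⊤ : ℕ∞) fun x : ℝ => p.eval x := by
  induction p using Polynomial.induction_on' with
  | add p q hp hq => simpa [Polynomial.eval_add] using hp.add hq
  | monomial n a =>
      simpa [Polynomial.eval_monomial] using (contDiff_const (c := a)).mul (contDiff_id.pow n)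

/-- with h the real polynomial such that (-1)^m·h(x²) = H_{2m}(ix),
the deformed oscillator potential U(x) = x² - 2(log H_{2m}(ix))'' - 2 is smooth on ℝ,
and ψ(x) = e^{-x²/2}/H_{2m}(ix) satisfies -ψ'' + U·ψ = (-1-4m)·ψ. -/
theorem deformed_harmonic_oscillator (m : ℕ) (h : Polynomial ℝ)
    (hrel : ∀ x : ℝ, Polynomial.aeval (Complex.I * (x : ℂ)) (hermiteP (2 * m))
        = (((-1 : ℝ) ^ m * h.eval (x ^ 2) : ℝ) : ℂ))
    (U ψ : ℝ → ℝ)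
    (hU : U = fun x => x ^ 2
        - 2 * deriv (deriv (fun y => Real.log (h.eval (y ^ 2)))) x - 2)
    (hψ : ψ = fun x => Real.exp (-x ^ 2 / 2) / h.eval (x ^ 2)) :
    ContDiff ℝ (⊤ : ℕ∞) U ∧
    (∀ x : ℝ, -(deriv (deriv ψ) x) + U x * ψ x = (-1 - 4 * (m : ℝ)) * ψ x) := by
  set p : Polynomial ℝ := hermQ (2 * m) with hpdef
  have hpos : ∀ x : ℝ, 0 < Polynomial.eval x p := fun x => hermQ_pos m x
  have hne : ∀ x : ℝ, Polynomial.eval x p ≠ 0 := fun x => (hpos x).ne'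
  -- link : h.eval (x^2) = p.eval x
  have hlink : ∀ x : ℝ, Polynomial.eval (x ^ 2) h = Polynomial.eval x p := by
    intro x
    have h1 := hrel x
    rw [hermQ_evalI (2 * m) x] at h1
    have hI : (Complex.I : ℂ) ^ (2 * m) = (((-1 : ℝ) ^ m : ℝ) : ℂ) := by
      rw [pow_mul, Complex.I_sq]; push_cast; ring
    rw [hI] at h1
    have h2 : (-1 : ℝ) ^ m * Polynomial.eval x (hermQ (2 * m))
        = (-1 : ℝ) ^ m * Polynomial.eval (x ^ 2) h := by exact_mod_cast h1
    have hnz : ((-1 : ℝ) ^ m) ≠ 0 := pow_ne_zero m (by norm_num)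
    exact (mul_left_cancel₀ hnz h2).symm
  have hode : ∀ x : ℝ,
      (Polynomial.derivative (Polynomial.derivative p)).eval x
        = 4 * m * Polynomial.eval x p - 2 * x * (Polynomial.derivative p).eval x := by
    intro x; rw [hpdef]; exact hermQ_ode m x
  -- the log second derivative
  have hfun2 : (fun y : ℝ => Real.log (h.eval (y ^ 2)))
      = fun y => Real.log (Polynomial.eval y p) := by
    funext y; rw [hlink y]
  have hld : deriv (fun y : ℝ => Real.log (Polynomial.eval y p))
      = fun y => Polynomial.eval y (Polynomial.derivative p) / Polynomial.eval y p := by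
    funext y
    exact ((p.hasDerivAt y).log (hne y)).deriv
  have hlog2 : deriv (deriv (fun y : ℝ => Real.log (h.eval (y ^ 2))))
      = fun x => (Polynomial.eval x (Polynomial.derivative (Polynomial.derivative p))
            * Polynomial.eval x p
          - Polynomial.eval x (Polynomial.derivative p)
            * Polynomial.eval x (Polynomial.derivative p)) / Polynomial.eval x p ^ 2 := by
    rw [hfun2, hld]
    funext x
    exact (((Polynomial.derivative p).hasDerivAt x).div (p.hasDerivAt x) (hne x)).deriv
  have hUf : U = fun x => x ^ 2
      - 2 * ((Polynomial.eval x (Polynomial.derivative (Polynomial.derivative p))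
            * Polynomial.eval x p
          - Polynomial.eval x (Polynomial.derivative p)
            * Polynomial.eval x (Polynomial.derivative p)) / Polynomial.eval x p ^ 2) - 2 := by
    rw [hU]; simp only [hlog2]
  have hψp : ψ = fun x => Real.exp (-x ^ 2 / 2) / Polynomial.eval x p := by
    rw [hψ]; funext x; rw [hlink x]
  constructor
  · rw [hUf]
    have c1 : ContDiff ℝ (⊤ : ℕ∞) fun x : ℝ => x ^ 2 := contDiff_id.pow 2
    have cnum : ContDiff ℝ (⊤ : ℕ∞) fun x : ℝ =>
        Polynomial.eval x (Polynomial.derivative (Polynomial.derivative p)) * Polynomial.eval x p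
          - Polynomial.eval x (Polynomial.derivative p)
            * Polynomial.eval x (Polynomial.derivative p) :=
      ((contDiff_polyeval _).mul (contDiff_polyeval _)).sub
        ((contDiff_polyeval _).mul (contDiff_polyeval _))
    have cden : ContDiff ℝ (⊤ : ℕ∞) fun x : ℝ => Polynomial.eval x p ^ 2 := (contDiff_polyeval p).pow 2
    exact (c1.sub (contDiff_const.mul (cnum.div cden (fun x => pow_ne_zero 2 (hne x))))).sub
      contDiff_const
  · intro x
    -- derivative facts for the exponential
    have hEd : ∀ y : ℝ, HasDerivAt (fun z : ℝ => Real.exp (-z ^ 2 / 2))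
        (-y * Real.exp (-y ^ 2 / 2)) y := by
      intro y
      have h1 : HasDerivAt (fun z : ℝ => -z ^ 2 / 2) (-y) y := by
        have h2 := (hasDerivAt_pow 2 y).neg.div_const 2
        refine h2.congr_deriv ?_
        norm_num
        try ring
      have h3 := h1.exp
      convert h3 using 1
      try ring
    -- first derivative of ψ
    have hψ1 : deriv ψ = fun y : ℝ =>
        (-y * Real.exp (-y ^ 2 / 2) * Polynomial.eval y p
          - Real.exp (-y ^ 2 / 2) * Polynomial.eval y (Polynomial.derivative p))
          / (Polynomial.eval y p * Polynomial.eval y p) := by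
      funext y
      rw [hψp]
      have h1 := (hEd y).div (p.hasDerivAt y) (hne y)
      have h2 : deriv (fun x : ℝ => Real.exp (-x ^ 2 / 2) / Polynomial.eval x p) y
          = (-y * Real.exp (-y ^ 2 / 2) * Polynomial.eval y p
              - Real.exp (-y ^ 2 / 2) * Polynomial.eval y (Polynomial.derivative p))
              / Polynomial.eval y p ^ 2 := h1.deriv
      rw [h2]
      try ring
    -- second derivative of ψ
    have hA : HasDerivAt (fun y : ℝ => -y * Real.exp (-y ^ 2 / 2))
        (-1 * Real.exp (-x ^ 2 / 2) + -x * (-x * Real.exp (-x ^ 2 / 2))) x :=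
      ((hasDerivAt_id x).neg).mul (hEd x)
    have hB := hA.mul (p.hasDerivAt x)
    have hC := (hEd x).mul ((Polynomial.derivative p).hasDerivAt x)
    have hN := hB.sub hC
    have hD := (p.hasDerivAt x).mul (p.hasDerivAt x)
    have hQ := hN.div hD (mul_ne_zero (hne x) (hne x))
    have hdd : deriv (deriv ψ) x =
        (((-1 * Real.exp (-x ^ 2 / 2) + -x * (-x * Real.exp (-x ^ 2 / 2))) * Polynomial.eval x p
            + -x * Real.exp (-x ^ 2 / 2) * Polynomial.eval x (Polynomial.derivative p)
          - (-x * Real.exp (-x ^ 2 / 2) * Polynomial.eval x (Polynomial.derivative p)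
            + Real.exp (-x ^ 2 / 2)
              * Polynomial.eval x (Polynomial.derivative (Polynomial.derivative p))))
          * (Polynomial.eval x p * Polynomial.eval x p)
          - (-x * Real.exp (-x ^ 2 / 2) * Polynomial.eval x p
              - Real.exp (-x ^ 2 / 2) * Polynomial.eval x (Polynomial.derivative p))
            * (Polynomial.eval x (Polynomial.derivative p) * Polynomial.eval x p
              + Polynomial.eval x p * Polynomial.eval x (Polynomial.derivative p)))
          / (Polynomial.eval x p * Polynomial.eval x p) ^ 2 := by
      rw [hψ1]
      exact hQ.deriv
    rw [hdd]
    simp only [hUf, hψp]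
    rw [hode x]
    have hpx := hpos x
    set A := Real.exp (-x ^ 2 / 2) with hAdef
    field_simp
    ring
end

section
/- For integers 0 ≤ n < A (A real), the function ψ(x) = e^{(n-A)x - e^{-x}/2} · L_n^{2(A-n)}(e^{-x}) satisfies the Schrödinger equation -ψ'' + U·ψ = -(A-n)²·ψ with the Morse potential U(x) = -(A + 1/2)e^{-x} + (1/4)e^{-2x}. -/
/-!
With `t = e^{-x}`, the ansatz `ψ(x) = e^{s x - t/2} L(t)` turns `-ψ'' + U ψ = -s² ψ`, for the
Morse potential `U = -(μ - s + 1/2) t + t²/4`, into Laguerre's equation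
`t L'' + (1 - 2s - t) L' + μ L = 0`; both derivatives of `ψ` are computed at once by noting that
the derivative of an ansatz is again an ansatz.
The theorem is the case `s = n - A`, `μ = n`, and `L_n^α` with `α = 2(A - n)` solves Laguerre's
equation because its coefficients satisfy `(k+1)(k+1+α) c_{k+1} + (n-k) c_k = 0`.
-/

/-- The generalized Laguerre polynomial L_m^α(x) = ∑_{k=0}^m (-1)^k/(k!(m-k)!) · (∏_{j=k+1}^m (α+j)) · x^k. -/
noncomputable def genLaguerre (m : ℕ) (α : ℝ) (x : ℝ) : ℝ :=
  ∑ k ∈ Finset.range (m + 1),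
    ((-1 : ℝ) ^ k / ((Nat.factorial k : ℝ) * (Nat.factorial (m - k) : ℝ)))
      * (∏ j ∈ Finset.Icc (k + 1) m, (α + (j : ℝ))) * x ^ k

open Polynomial Finset Real

noncomputable def laguerreCoeff (m : ℕ) (α : ℝ) (k : ℕ) : ℝ :=
  ((-1 : ℝ) ^ k / ((Nat.factorial k : ℝ) * (Nat.factorial (m - k) : ℝ)))
    * (∏ j ∈ Icc (k + 1) m, (α + (j : ℝ)))

noncomputable def genLaguerrePoly (m : ℕ) (α : ℝ) : ℝ[X] :=
  ∑ k ∈ range (m + 1), C (laguerreCoeff m α k) * X ^ k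

lemma eval_genLaguerrePoly (m : ℕ) (α x : ℝ) :
    (genLaguerrePoly m α).eval x = genLaguerre m α x := by
  simp only [genLaguerrePoly, genLaguerre, eval_finsetSum, eval_mul, eval_C, eval_pow, eval_X,
    laguerreCoeff]

lemma coeff_genLaguerrePoly (m : ℕ) (α : ℝ) (k : ℕ) :
    (genLaguerrePoly m α).coeff k = if k ≤ m then laguerreCoeff m α k else 0 := by
  simp [genLaguerrePoly]

lemma laguerreCoeff_succ (m : ℕ) (α : ℝ) {k : ℕ} (hk : k < m) :
    (k + 1) * (k + 1 + α) * laguerreCoeff m α (k + 1) + (m - k) * laguerreCoeff m α k = 0 := by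
  obtain ⟨a, rfl⟩ : ∃ a, m = k + 1 + a := ⟨m - (k + 1), by omega⟩
  rw [laguerreCoeff, laguerreCoeff,
    ← mul_prod_Ioc_eq_prod_Icc (show k + 1 ≤ k + 1 + a by omega), ← Icc_add_one_left_eq_Ioc,
    show k + 1 + a - (k + 1) = a by omega, show k + 1 + a - k = a + 1 by omega,
    Nat.factorial_succ k, Nat.factorial_succ a]
  push_cast
  field_simp
  ring

lemma coeff_genLaguerrePoly_succ (m : ℕ) (α : ℝ) (k : ℕ) :
    (k + 1) * (k + 1 + α) * (genLaguerrePoly m α).coeff (k + 1)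
      + (m - k) * (genLaguerrePoly m α).coeff k = 0 := by
  simp only [coeff_genLaguerrePoly]
  rcases lt_trichotomy k m with hk | rfl | hk
  · simp [hk.le, Nat.succ_le_of_lt hk, laguerreCoeff_succ m α hk]
  · simp
  · simp [show ¬ k ≤ m by omega, show ¬ k + 1 ≤ m by omega]

theorem genLaguerrePoly_ode (m : ℕ) (α : ℝ) :
    X * derivative (derivative (genLaguerrePoly m α))
      + (C (α + 1) - X) * derivative (genLaguerrePoly m α) + C (m : ℝ) * genLaguerrePoly m α
      = 0 := by
  ext k
  have h := coeff_genLaguerrePoly_succ m α k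
  cases k <;>
  · simp only [sub_mul, coeff_add, coeff_sub, coeff_X_mul_zero, coeff_X_mul, coeff_C_mul,
      coeff_derivative, coeff_zero]
    push_cast at h ⊢
    linear_combination h

noncomputable def morseAnsatz (s : ℝ) (L : ℝ → ℝ) (x : ℝ) : ℝ :=
  exp (s * x - exp (-x) / 2) * L (exp (-x))

section Morse

variable {s : ℝ} {L L' L'' : ℝ → ℝ}

lemma hasDerivAt_morseAnsatz (hL : ∀ y > 0, HasDerivAt L (L' y) y) (x : ℝ) :
    HasDerivAt (morseAnsatz s L) (morseAnsatz s (fun y => (s + y / 2) * L y - y * L' y) x) x := by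
  have hexp : HasDerivAt (fun z => exp (-z)) (-exp (-x)) x := by
    simpa using (hasDerivAt_neg x).exp
  have hphase : HasDerivAt (fun z => s * z - exp (-z) / 2) (s + exp (-x) / 2) x :=
    (((hasDerivAt_id' x).const_mul s).fun_sub (hexp.div_const 2)).congr_deriv (by ring)
  exact (hphase.exp.fun_mul ((hL (exp (-x)) (exp_pos _)).comp x hexp)).congr_deriv
    (by simp only [morseAnsatz, Function.comp_apply]; ring)

theorem morseAnsatz_schrodinger {μ : ℝ} (hL : ∀ y > 0, HasDerivAt L (L' y) y)
    (hL' : ∀ y > 0, HasDerivAt L' (L'' y) y)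
    (hode : ∀ y > 0, y * L'' y + (1 - 2 * s - y) * L' y + μ * L y = 0) (x : ℝ) :
    -deriv (deriv (morseAnsatz s L)) x
        + (-(μ - s + 1 / 2) * exp (-x) + 1 / 4 * exp (-2 * x)) * morseAnsatz s L x
      = -s ^ 2 * morseAnsatz s L x := by
  have hM : ∀ y > 0, HasDerivAt (fun y => (s + y / 2) * L y - y * L' y)
      (L y / 2 + (s + y / 2) * L' y - (L' y + y * L'' y)) y := fun y hy =>
    ((((hasDerivAt_id' y).div_const 2).const_add s).fun_mul (hL y hy)).fun_sub
      ((hasDerivAt_id' y).fun_mul (hL' y hy)) |>.congr_deriv (by ring)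
  rw [show deriv (morseAnsatz s L) = _ from funext fun x => (hasDerivAt_morseAnsatz hL x).deriv,
    (hasDerivAt_morseAnsatz hM x).deriv]
  have hexp_two : exp (-2 * x) = exp (-x) ^ 2 := by rw [sq, ← exp_add]; congr 1; ring
  simp only [morseAnsatz, hexp_two]
  linear_combination (-(exp (s * x - exp (-x) / 2) * exp (-x))) * hode (exp (-x)) (exp_pos _)

end Morse

theorem morse_bound_states_general (n : ℕ) (A : ℝ)
    (U ψ : ℝ → ℝ)
    (hU : U = fun x => -(A + 1/2) * Real.exp (-x) + (1/4) * Real.exp (-2 * x))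
    (hψ : ψ = fun x => Real.exp (((n : ℝ) - A) * x - Real.exp (-x) / 2)
        * genLaguerre n (2 * (A - (n : ℝ))) (Real.exp (-x))) :
    ∀ x : ℝ, -(deriv (deriv ψ) x) + U x * ψ x = -((A - (n : ℝ)) ^ 2) * ψ x := by
  intro x
  set p := genLaguerrePoly n (2 * (A - n))
  have hψp : ψ = morseAnsatz (n - A) p.eval := by
    rw [hψ, ← funext (eval_genLaguerrePoly n (2 * (A - n)))]
    rfl
  have hode (y : ℝ) : y * p.derivative.derivative.eval y
      + (1 - 2 * (n - A) - y) * p.derivative.eval y + n * p.eval y = 0 := by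
    have := congrArg (eval y) (genLaguerrePoly_ode n (2 * (A - n)))
    simp only [eval_add, eval_mul, eval_sub, eval_X, eval_C, eval_zero] at this
    linear_combination this
  have key := morseAnsatz_schrodinger (fun y _ => p.hasDerivAt y)
    (fun y _ => p.derivative.hasDerivAt y) (fun y _ => hode y) x
  rw [hU, hψp]
  linear_combination key

/-- for 0 ≤ n < A, the function ψ(x) = e^{(n-A)x - e^{-x}/2}·L_n^{2(A-n)}(e^{-x})
satisfies -ψ'' + U·ψ = -(A-n)²·ψ for the Morse potential U(x) = -(A+½)e^{-x} + ¼e^{-2x}. -/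
theorem morse_bound_states (n : ℕ) (A : ℝ) (hA : (n : ℝ) < A)
    (U ψ : ℝ → ℝ)
    (hU : U = fun x => -(A + 1/2) * Real.exp (-x) + (1/4) * Real.exp (-2 * x))
    (hψ : ψ = fun x => Real.exp (((n : ℝ) - A) * x - Real.exp (-x) / 2)
        * genLaguerre n (2 * (A - (n : ℝ))) (Real.exp (-x))) :
    ∀ x : ℝ, -(deriv (deriv ψ) x) + U x * ψ x = -((A - (n : ℝ)) ^ 2) * ψ x :=
  morse_bound_states_general n A U ψ hU hψ
end
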